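/- arXiv:2302.03452 — 9 statements merged into one kernel-verified Lean document; each statement's English description precedes it below -/
import Mathlib

section
/- Let v and k be integers with 2 ≤ k < v and let 𝒜 be a (v,k,1)-BIBD on the point set Fin v. Fix a point x ∈ Fin v. Then: (i) the number of blocks containing x satisfies |B_x| · (k−1) = v−1; (ii) the map A ↦ succ_A(x) is injective on B_x; (iii) for all blocks A, A' ∈ B_x, one has succ_{A'}(x) ∈ A if and only if A' = A. Consequently, the row set {succ_A(x) : A ∈ B_x}, with row succ_A(x) matched to column A for each A ∈ B_x, is an identity submatrix of the incidence matrix C, of size (v−1)/(k−1). -/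
/-- The cyclic successor of `x` in a block `A ⊆ Fin v`: the least element of `A`
greater than `x` if one exists, otherwise the least element of `A`
(junk value `x` if `A` is empty). -/
def succBlock {v : ℕ} (A : Finset (Fin v)) (x : Fin v) : Fin v :=
  if h : (A.filter fun y => x < y).Nonempty then (A.filter fun y => x < y).min' h
  else if h2 : A.Nonempty then A.min' h2 else x

/-- `IsIdentitySubmatrix M validCols R σ` : the row set `R`, with row `u` matched to
column `σ u`, forms an identity submatrix of the binary matrix `M` (where the entry
in row `u` and column `f` is `1` iff `M u f` holds), whose column index set is
`validCols`. -/
def IsIdentitySubmatrix {U F : Type*} (M : U → F → Prop) (validCols : Set F)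
    (R : Finset U) (σ : U → F) : Prop :=
  (∀ u ∈ R, σ u ∈ validCols) ∧ Set.InjOn σ ↑R ∧ (∀ u ∈ R, M u (σ u)) ∧
    ∀ u ∈ R, ∀ u' ∈ R, u ≠ u' → ¬ M u (σ u')

theorem stmt0 (v k : ℕ) (hk : 2 ≤ k) (hkv : k < v)
    (𝒜 : Finset (Finset (Fin v)))
    (hcard : ∀ A ∈ 𝒜, A.card = k)
    (hpair : ∀ x y : Fin v, x ≠ y → ∃! A, A ∈ 𝒜 ∧ x ∈ A ∧ y ∈ A)
    (x : Fin v) :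
    ((𝒜.filter (fun A => x ∈ A)).card * (k - 1) = v - 1) ∧
    (Set.InjOn (fun A => succBlock A x) ↑(𝒜.filter (fun A => x ∈ A))) ∧
    (∀ A ∈ 𝒜.filter (fun A => x ∈ A), ∀ A' ∈ 𝒜.filter (fun A => x ∈ A),
        (succBlock A' x ∈ A ↔ A' = A)) ∧
    (∃ σ : Fin v → Finset (Fin v),
      (∀ A ∈ 𝒜.filter (fun A => x ∈ A), σ (succBlock A x) = A) ∧
      IsIdentitySubmatrix (fun y A => y ∈ A) {A | A ∈ 𝒜}
        ((𝒜.filter (fun A => x ∈ A)).image (fun A => succBlock A x)) σ ∧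
      ((𝒜.filter (fun A => x ∈ A)).image (fun A => succBlock A x)).card
        = (v - 1) / (k - 1)) := by
  classical
  set B := 𝒜.filter (fun A => x ∈ A) with hBdef
  have hmem : ∀ A ∈ B, A ∈ 𝒜 ∧ x ∈ A := by
    intro A hA; rw [hBdef, Finset.mem_filter] at hA; exact hA
  -- successor lies in the block and differs from x
  have hsucc : ∀ A ∈ B, succBlock A x ∈ A ∧ succBlock A x ≠ x := by
    intro A hA
    obtain ⟨hA𝒜, hx⟩ := hmem A hA
    have hk2 : 2 ≤ A.card := (hcard A hA𝒜) ▸ hk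
    have hz : ∃ z ∈ A, z ≠ x := by
      by_contra h
      push_neg at h
      have hsub : A ⊆ {x} := fun z hz => Finset.mem_singleton.2 (h z hz)
      have := Finset.card_le_card hsub
      simp at this; omega
    obtain ⟨z, hzA, hzx⟩ := hz
    unfold succBlock
    split_ifs with h1 h2
    · have h := Finset.min'_mem _ h1
      rw [Finset.mem_filter] at h
      exact ⟨h.1, (h.2).ne'⟩
    · refine ⟨A.min'_mem h2, ?_⟩
      have hz' : ¬ x < z := fun hlt => h1 ⟨z, Finset.mem_filter.2 ⟨hzA, hlt⟩⟩
      have h3 : A.min' h2 ≤ z := A.min'_le z hzA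
      have h4 : A.min' h2 < x :=
        lt_of_le_of_lt h3 (lt_of_le_of_ne (not_lt.1 hz') hzx)
      exact ne_of_lt h4
    · exact absurd ⟨x, hx⟩ h2
  -- uniqueness of block through x and y ≠ x
  have huniq : ∀ A ∈ B, ∀ A' ∈ B, ∀ y : Fin v, y ≠ x → y ∈ A → y ∈ A' → A = A' := by
    intro A hA A' hA' y hyx hyA hyA'
    obtain ⟨hA𝒜, hxA⟩ := hmem A hA
    obtain ⟨hA'𝒜, hxA'⟩ := hmem A' hA'
    obtain ⟨W, _, hW⟩ := hpair x y (Ne.symm hyx)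
    exact (hW A ⟨hA𝒜, hxA, hyA⟩).trans (hW A' ⟨hA'𝒜, hxA', hyA'⟩).symm
  -- injectivity of the successor map
  have hinj : Set.InjOn (fun A => succBlock A x) ↑B := by
    intro A hA A' hA' h
    simp only at h
    have h1 := hsucc A (by exact_mod_cast hA)
    have h2 := hsucc A' (by exact_mod_cast hA')
    exact huniq A (by exact_mod_cast hA) A' (by exact_mod_cast hA')
      (succBlock A x) h1.2 h1.1 (h ▸ h2.1)
  -- statement (iii)
  have hiff : ∀ A ∈ B, ∀ A' ∈ B, (succBlock A' x ∈ A ↔ A' = A) := by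
    intro A hA A' hA'
    constructor
    · intro hmem'
      have h2 := hsucc A' hA'
      exact huniq A' hA' A hA (succBlock A' x) h2.2 h2.1 hmem'
    · rintro rfl; exact (hsucc A' hA').1
  -- the counting identity
  have hcov : Finset.univ.erase x = B.biUnion (fun A => A.erase x) := by
    ext y
    simp only [Finset.mem_erase, Finset.mem_univ, and_true, Finset.mem_biUnion]
    constructor
    · intro hy
      obtain ⟨W, ⟨hW𝒜, hxW, hyW⟩, _⟩ := hpair x y (Ne.symm hy)
      exact ⟨W, Finset.mem_filter.2 ⟨hW𝒜, hxW⟩, ⟨hy, hyW⟩⟩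
    · rintro ⟨A, hA, hy⟩
      exact hy.1
  have hdisj : ∀ A ∈ B, ∀ A' ∈ B, A ≠ A' →
      Disjoint (A.erase x) (A'.erase x) := by
    intro A hA A' hA' hne
    rw [Finset.disjoint_left]
    intro y hy hy'
    obtain ⟨hyx, hyA⟩ := Finset.mem_erase.1 hy
    obtain ⟨_, hyA'⟩ := Finset.mem_erase.1 hy'
    exact hne (huniq A hA A' hA' y hyx hyA hyA')
  have hcount : B.card * (k - 1) = v - 1 := by
    have h1 := Finset.card_biUnion hdisj
    rw [← hcov] at h1
    have h2 : (Finset.univ.erase x).card = v - 1 := by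
      rw [Finset.card_erase_of_mem (Finset.mem_univ x)]
      simp
    have h3 : ∀ A ∈ B, (A.erase x).card = k - 1 := by
      intro A hA
      obtain ⟨hA𝒜, hx⟩ := hmem A hA
      rw [Finset.card_erase_of_mem hx, hcard A hA𝒜]
    rw [h2, Finset.sum_congr rfl h3, Finset.sum_const, smul_eq_mul] at h1
    omega
  refine ⟨hcount, hinj, hiff, ?_⟩
  -- construct σ
  set σ : Fin v → Finset (Fin v) := fun y =>
    if h : ∃ A, A ∈ B ∧ succBlock A x = y then h.choose else ∅ with hσdef
  have hσ : ∀ A ∈ B, σ (succBlock A x) = A := by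
    intro A hA
    have hex : ∃ A', A' ∈ B ∧ succBlock A' x = succBlock A x := ⟨A, hA, rfl⟩
    rw [hσdef]
    simp only [dif_pos hex]
    obtain ⟨h1, h2⟩ := hex.choose_spec
    exact hinj (by exact_mod_cast h1) (by exact_mod_cast hA) h2
  refine ⟨σ, hσ, ⟨?_, ?_, ?_, ?_⟩, ?_⟩
  · intro u hu
    obtain ⟨A, hA, rfl⟩ := Finset.mem_image.1 hu
    rw [hσ A hA]
    exact (hmem A hA).1
  · intro u hu u' hu' h
    simp only [Finset.coe_image, Set.mem_image] at hu hu'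
    obtain ⟨A, hA, rfl⟩ := hu
    obtain ⟨A', hA', rfl⟩ := hu'
    rw [hσ A (by exact_mod_cast hA), hσ A' (by exact_mod_cast hA')] at h
    rw [h]
  · intro u hu
    obtain ⟨A, hA, rfl⟩ := Finset.mem_image.1 hu
    rw [hσ A hA]
    exact (hsucc A hA).1
  · intro u hu u' hu' hne
    obtain ⟨A, hA, rfl⟩ := Finset.mem_image.1 hu
    obtain ⟨A', hA', rfl⟩ := Finset.mem_image.1 hu'
    rw [hσ A' hA']
    intro hmem'
    have : A = A' := (hiff A' hA' A hA).1 hmem'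
    exact hne (by rw [this])
  · rw [Finset.card_image_of_injOn hinj]
    have hk1 : 0 < k - 1 := by omega
    rw [← hcount, Nat.mul_div_cancel _ hk1]
end

section
/- Let v and k be integers with 2 ≤ k < v and let 𝒜 be a (v,k,1)-BIBD on the point set Fin v. For each x ∈ Fin v, let C_x denote the identity submatrix of the incidence matrix C with row set {succ_A(x) : A ∈ B_x} and with row succ_A(x) matched to column A for each A ∈ B_x. Then for all distinct x₁, x₂ ∈ Fin v, there is no one-entry of C (that is, no pair (y,A) with y ∈ A ∈ 𝒜) that is covered by both C_{x₁} and C_{x₂}. -/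
/-- The one-entry `(y, A)` of the incidence matrix of the design `𝒜` is covered by
the identity submatrix `C_x` (whose row set is `{succ_A(x) : A ∈ B_x}` and whose
column set is `B_x`, the set of blocks containing `x`). -/
def CoveredBIBD {v : ℕ} (𝒜 : Finset (Finset (Fin v))) (x y : Fin v)
    (A : Finset (Fin v)) : Prop :=
  (∃ A' ∈ 𝒜.filter (fun B => x ∈ B), y = succBlock A' x) ∧
    A ∈ 𝒜.filter (fun B => x ∈ B)

lemma succBlock_mem {v : ℕ} {A : Finset (Fin v)} (hA : A.Nonempty) (x : Fin v) :
    succBlock A x ∈ A := by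
  unfold succBlock
  split_ifs with h
  · exact (Finset.mem_filter.mp ((A.filter _).min'_mem h)).1
  · exact A.min'_mem hA

lemma succBlock_ne {v : ℕ} {A : Finset (Fin v)} {x z : Fin v}
    (hx : x ∈ A) (hz : z ∈ A) (hzx : z ≠ x) : succBlock A x ≠ x := by
  unfold succBlock
  split_ifs with h h2
  · have := (Finset.mem_filter.mp ((A.filter _).min'_mem h)).2
    exact ne_of_gt this
  · -- filter empty: all elements ≤ x, so z < x, min' A ≤ z < x
    have hle : ∀ a ∈ A, a ≤ x := by
      intro a ha
      by_contra hlt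
      exact h ⟨a, Finset.mem_filter.mpr ⟨ha, lt_of_not_ge hlt⟩⟩
    have hzlt : z < x := lt_of_le_of_ne (hle z hz) hzx
    exact ne_of_lt (lt_of_le_of_lt (A.min'_le z hz) hzlt)
  · exact absurd ⟨x, hx⟩ h2

lemma succBlock_inj {v : ℕ} {A : Finset (Fin v)} {x₁ x₂ : Fin v}
    (h1 : x₁ ∈ A) (h2 : x₂ ∈ A) (hne : x₁ ≠ x₂) :
    succBlock A x₁ ≠ succBlock A x₂ := by
  wlog hlt : x₁ < x₂ generalizing x₁ x₂
  · exact (this h2 h1 hne.symm (hne.lt_or_gt.resolve_left hlt)).symm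
  intro heq
  have hn1 : (A.filter fun y => x₁ < y).Nonempty := ⟨x₂, Finset.mem_filter.mpr ⟨h2, hlt⟩⟩
  have hy1 : succBlock A x₁ = (A.filter fun y => x₁ < y).min' hn1 := by
    unfold succBlock; rw [dif_pos hn1]
  have hy1le : succBlock A x₁ ≤ x₂ := by
    rw [hy1]; exact Finset.min'_le _ _ (Finset.mem_filter.mpr ⟨h2, hlt⟩)
  by_cases h : (A.filter fun y => x₂ < y).Nonempty
  · have hy2 : succBlock A x₂ = (A.filter fun y => x₂ < y).min' h := by
      unfold succBlock; rw [dif_pos h]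
    have : x₂ < succBlock A x₂ :=
      (Finset.mem_filter.mp (hy2 ▸ ((A.filter _).min'_mem h))).2
    exact absurd (heq ▸ hy1le) (not_le.mpr this)
  · have hy2 : succBlock A x₂ = A.min' ⟨x₁, h1⟩ := by
      unfold succBlock; rw [dif_neg h, dif_pos ⟨x₁, h1⟩]
    have hgt : x₁ < succBlock A x₁ := by
      rw [hy1]; exact (Finset.mem_filter.mp ((A.filter _).min'_mem hn1)).2
    have : succBlock A x₂ ≤ x₁ := hy2 ▸ A.min'_le x₁ h1
    exact absurd (heq ▸ hgt) (not_lt.mpr this)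

theorem stmt1 (v k : ℕ) (hk : 2 ≤ k) (hkv : k < v)
    (𝒜 : Finset (Finset (Fin v)))
    (hcard : ∀ A ∈ 𝒜, A.card = k)
    (hpair : ∀ x y : Fin v, x ≠ y → ∃! A, A ∈ 𝒜 ∧ x ∈ A ∧ y ∈ A)
    (x₁ x₂ : Fin v) (hne : x₁ ≠ x₂) :
    ¬ ∃ (y : Fin v) (A : Finset (Fin v)), A ∈ 𝒜 ∧ y ∈ A ∧
        CoveredBIBD 𝒜 x₁ y A ∧ CoveredBIBD 𝒜 x₂ y A := by
  rintro ⟨y, A, hA, hyA, ⟨⟨A₁, hA₁, hy1⟩, hAx1⟩, ⟨⟨A₂, hA₂, hy2⟩, hAx2⟩⟩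
  rw [Finset.mem_filter] at hA₁ hA₂ hAx1 hAx2
  -- blocks have a second element
  have two_mem : ∀ B ∈ 𝒜, ∀ u ∈ B, ∃ z ∈ B, z ≠ u := by
    intro B hB u hu
    have : 1 < B.card := by rw [hcard B hB]; omega
    obtain ⟨a, ha, b, hb, hab⟩ := Finset.one_lt_card.mp this
    rcases eq_or_ne a u with rfl | h
    · exact ⟨b, hb, fun e => hab e.symm⟩
    · exact ⟨a, ha, h⟩
  obtain ⟨z₁, hz₁, hz₁x⟩ := two_mem A₁ hA₁.1 x₁ hA₁.2
  obtain ⟨z₂, hz₂, hz₂x⟩ := two_mem A₂ hA₂.1 x₂ hA₂.2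
  have hy1m : y ∈ A₁ := hy1 ▸ succBlock_mem ⟨x₁, hA₁.2⟩ x₁
  have hy2m : y ∈ A₂ := hy2 ▸ succBlock_mem ⟨x₂, hA₂.2⟩ x₂
  have hyx1 : y ≠ x₁ := hy1 ▸ succBlock_ne hA₁.2 hz₁ hz₁x
  have hyx2 : y ≠ x₂ := hy2 ▸ succBlock_ne hA₂.2 hz₂ hz₂x
  obtain ⟨B₁, _, huniq1⟩ := hpair x₁ y hyx1.symm
  have e1 : A₁ = A := by
    rw [huniq1 A₁ ⟨hA₁.1, hA₁.2, hy1m⟩, huniq1 A ⟨hA, hAx1.2, hyA⟩]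
  obtain ⟨B₂, _, huniq2⟩ := hpair x₂ y hyx2.symm
  have e2 : A₂ = A := by
    rw [huniq2 A₂ ⟨hA₂.1, hA₂.2, hy2m⟩, huniq2 A ⟨hA, hAx2.2, hyA⟩]
  subst e1; subst e2
  exact succBlock_inj hAx1.2 hAx2.2 hne (hy1 ▸ hy2 ▸ rfl)
end

section
/- Let (X,𝒜) be a Steiner system S(t,k,v) with 1 ≤ t ≤ k < v. Let J be an index set of size C(k−1,t−1), and suppose that for each y ∈ X one is given maps φ^y_j : B_y → (t−1)-element subsets of X (for j ∈ J) such that for every block B ∈ B_y, the assignment j ↦ φ^y_j(B) is a bijection from J onto the set of all (t−1)-element subsets of B ∖ {y}. For each y ∈ X and j ∈ J, let T_{y,j} denote the identity submatrix of T with row set {φ^y_j(B) : B ∈ B_y} and row φ^y_j(B) matched to column (y,B). Then the family {T_{y,j} : y ∈ X, j ∈ J} is a non-overlapping identity submatrix cover of T: every one-entry T(D,(y,B)) = 1 is covered by exactly one member of the family, namely T_{y,j} for the unique j ∈ J with φ^y_j(B) = D. This cover consists of v · C(k−1,t−1) identity submatrices, each of size C(v−1,t−1)/C(k−1,t−1).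 -/
theorem stmt4 (v k t : ℕ) (ht : 1 ≤ t) (htk : t ≤ k) (hkv : k < v)
    (X : Type*) [Fintype X] [DecidableEq X] (hX : Fintype.card X = v)
    (𝒜 : Finset (Finset X))
    (hcard : ∀ B ∈ 𝒜, B.card = k)
    (hSteiner : ∀ S : Finset X, S.card = t → ∃! B, B ∈ 𝒜 ∧ S ⊆ B)
    (J : Type*) [Fintype J] (hJ : Fintype.card J = Nat.choose (k - 1) (t - 1))
    (φ : X → J → Finset X → Finset X)
    (hφ : ∀ (y : X), ∀ B ∈ 𝒜, y ∈ B →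
      Set.BijOn (fun j => φ y j B) Set.univ
        ↑((B.erase y).powersetCard (t - 1))) :
    -- each T_{y,j} is an identity submatrix of T of the stated size
    (∀ (y : X) (j : J), ∃ σ : Finset X → X × Finset X,
      (∀ B ∈ 𝒜.filter (fun B => y ∈ B), σ (φ y j B) = (y, B)) ∧
      IsIdentitySubmatrix (fun D p => p.1 ∉ D ∧ insert p.1 D ⊆ p.2)
        {p : X × Finset X | p.2 ∈ 𝒜 ∧ p.1 ∈ p.2}
        ((𝒜.filter (fun B => y ∈ B)).image (φ y j)) σ ∧
      ((𝒜.filter (fun B => y ∈ B)).image (φ y j)).card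
        = Nat.choose (v - 1) (t - 1) / Nat.choose (k - 1) (t - 1)) ∧
    -- the family consists of v · C(k−1,t−1) identity submatrices
    (Fintype.card (X × J) = v * Nat.choose (k - 1) (t - 1)) ∧
    -- every one-entry T(D,(y₀,B₀)) = 1 is covered by exactly one member T_{y,j},
    -- namely the one with y = y₀ and φ^{y₀}_j(B₀) = D
    (∀ (D : Finset X) (y₀ : X) (B₀ : Finset X),
      B₀ ∈ 𝒜 → y₀ ∈ B₀ → D.card = t - 1 → y₀ ∉ D → insert y₀ D ⊆ B₀ →
      (∃! p : X × J,
        D ∈ (𝒜.filter (fun B => p.1 ∈ B)).image (φ p.1 p.2) ∧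
        p.1 = y₀ ∧ B₀ ∈ 𝒜.filter (fun B => p.1 ∈ B)) ∧
      (∀ p : X × J,
        (D ∈ (𝒜.filter (fun B => p.1 ∈ B)).image (φ p.1 p.2) ∧
         p.1 = y₀ ∧ B₀ ∈ 𝒜.filter (fun B => p.1 ∈ B)) →
        φ y₀ p.2 B₀ = D)) := by

  classical
  -- uniqueness of blocks through a t-set
  have hblock : ∀ (S : Finset X), S.card = t → ∀ B ∈ 𝒜, S ⊆ B → ∀ B' ∈ 𝒜, S ⊆ B' → B = B' := by
    intro S hS B hB hSB B' hB' hSB'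
    obtain ⟨C, _, hu⟩ := hSteiner S hS
    exact (hu B ⟨hB, hSB⟩).trans (hu B' ⟨hB', hSB'⟩).symm
  -- basic facts about φ
  have hmem : ∀ y, ∀ B ∈ 𝒜, y ∈ B → ∀ j : J,
      φ y j B ⊆ B.erase y ∧ (φ y j B).card = t - 1 := by
    intro y B hB hy j
    have := (hφ y B hB hy).mapsTo (Set.mem_univ j)
    rw [Finset.mem_coe, Finset.mem_powersetCard] at this
    exact this
  have hnotmem : ∀ y, ∀ B ∈ 𝒜, y ∈ B → ∀ j : J, y ∉ φ y j B := by
    intro y B hB hy j hmemy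
    exact (Finset.notMem_erase y B) ((hmem y B hB hy j).1 hmemy)
  have hins : ∀ y, ∀ B ∈ 𝒜, y ∈ B → ∀ j : J,
      insert y (φ y j B) ⊆ B ∧ (insert y (φ y j B)).card = t := by
    intro y B hB hy j
    constructor
    · intro x hx
      rcases Finset.mem_insert.1 hx with h | h
      · exact h ▸ hy
      · exact Finset.mem_of_mem_erase ((hmem y B hB hy j).1 h)
    · rw [Finset.card_insert_of_notMem (hnotmem y B hB hy j), (hmem y B hB hy j).2]
      omega
  -- key injectivity
  have hkey : ∀ y, ∀ B ∈ 𝒜, y ∈ B → ∀ B' ∈ 𝒜, y ∈ B' → ∀ j j' : J,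
      φ y j B = φ y j' B' → B = B' ∧ j = j' := by
    intro y B hB hy B' hB' hy' j j' heq
    have h1 := hins y B hB hy j
    have h2 := hins y B' hB' hy' j'
    have hBB' : B = B' := hblock (insert y (φ y j B)) h1.2 B hB h1.1 B' hB'
      (by rw [heq]; exact h2.1)
    refine ⟨hBB', ?_⟩
    have := (hφ y B hB hy).injOn (Set.mem_univ j) (Set.mem_univ j')
    exact this (by simpa [hBB'] using heq)
  -- surjectivity
  have hsurj : ∀ y, ∀ B ∈ 𝒜, y ∈ B → ∀ D : Finset X, D ⊆ B.erase y → D.card = t - 1 →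
      ∃ j : J, φ y j B = D := by
    intro y B hB hy D hD hDc
    have hDm : D ∈ (B.erase y).powersetCard (t-1) := Finset.mem_powersetCard.2 ⟨hD, hDc⟩
    obtain ⟨j, _, hj⟩ := (hφ y B hB hy).surjOn (Finset.mem_coe.2 hDm)
    exact ⟨j, hj⟩
  -- counting: number of blocks through y
  have hchoosepos : 0 < Nat.choose (k - 1) (t - 1) :=
    Nat.choose_pos (Nat.sub_le_sub_right htk 1)
  have hcount : ∀ y : X, (𝒜.filter (fun B => y ∈ B)).card * Nat.choose (k - 1) (t - 1)
      = Nat.choose (v - 1) (t - 1) := by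
    intro y
    have hbij : ((𝒜.filter (fun B => y ∈ B)) ×ˢ (Finset.univ : Finset J)).card
        = ((Finset.univ.erase y).powersetCard (t - 1)).card := by
      apply Finset.card_bij (fun p _ => φ y p.2 p.1)
      · intro p hp
        rw [Finset.mem_product, Finset.mem_filter] at hp
        obtain ⟨⟨hB, hy⟩, _⟩ := hp
        rw [Finset.mem_powersetCard]
        refine ⟨?_, (hmem y p.1 hB hy p.2).2⟩
        intro x hx
        have := (hmem y p.1 hB hy p.2).1 hx
        rw [Finset.mem_erase] at this ⊢
        exact ⟨this.1, Finset.mem_univ x⟩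
      · intro p hp q hq heq
        rw [Finset.mem_product, Finset.mem_filter] at hp hq
        have := hkey y p.1 hp.1.1 hp.1.2 q.1 hq.1.1 hq.1.2 p.2 q.2 heq
        exact Prod.ext this.1 this.2
      · intro D hD
        rw [Finset.mem_powersetCard] at hD
        have hyD : y ∉ D := fun h => Finset.notMem_erase y _ (hD.1 h)
        have hcardins : (insert y D).card = t := by
          rw [Finset.card_insert_of_notMem hyD, hD.2]; omega
        obtain ⟨B, ⟨hB, hsub⟩, _⟩ := hSteiner (insert y D) hcardins
        have hyB : y ∈ B := hsub (Finset.mem_insert_self y D)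
        have hDB : D ⊆ B.erase y := fun x hx => Finset.mem_erase.2
          ⟨fun h => hyD (h ▸ hx), hsub (Finset.mem_insert_of_mem hx)⟩
        obtain ⟨j, hj⟩ := hsurj y B hB hyB D hDB hD.2
        exact ⟨(B, j), Finset.mem_product.2 ⟨Finset.mem_filter.2 ⟨hB, hyB⟩,
          Finset.mem_univ j⟩, hj⟩
    rw [Finset.card_product, Finset.card_univ, hJ] at hbij
    rw [hbij, Finset.card_powersetCard, Finset.card_erase_of_mem (Finset.mem_univ y),
      Finset.card_univ, hX]
  -- size of each image
  have himgcard : ∀ (y : X) (j : J),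
      ((𝒜.filter (fun B => y ∈ B)).image (φ y j)).card
        = Nat.choose (v - 1) (t - 1) / Nat.choose (k - 1) (t - 1) := by
    intro y j
    have hinj : Set.InjOn (φ y j) ↑(𝒜.filter (fun B => y ∈ B)) := by
      intro B hB B' hB' heq
      rw [Finset.mem_coe, Finset.mem_filter] at hB hB'
      exact (hkey y B hB.1 hB.2 B' hB'.1 hB'.2 j j heq).1
    rw [Finset.card_image_of_injOn hinj]
    rw [← hcount y, Nat.mul_div_cancel _ hchoosepos]
  refine ⟨?_, ?_, ?_⟩
  · -- identity submatrices
    intro y j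
    set s := 𝒜.filter (fun B => y ∈ B) with hs
    refine ⟨fun D => (y, if h : ∃ B, B ∈ 𝒜 ∧ insert y D ⊆ B then h.choose else ∅),
      ?_, ?_, himgcard y j⟩
    · intro B hB
      rw [hs, Finset.mem_filter] at hB
      have hinsB := hins y B hB.1 hB.2 j
      have hex : ∃ B', B' ∈ 𝒜 ∧ insert y (φ y j B) ⊆ B' := ⟨B, hB.1, hinsB.1⟩
      simp only [dif_pos hex]
      have := hex.choose_spec
      have : hex.choose = B :=
        hblock (insert y (φ y j B)) hinsB.2 hex.choose this.1 this.2 B hB.1 hinsB.1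
      rw [this]
    · -- it's an identity submatrix
      have hsig : ∀ B ∈ s, (fun D => (y, if h : ∃ B, B ∈ 𝒜 ∧ insert y D ⊆ B
          then h.choose else ∅)) (φ y j B) = (y, B) := by
        intro B hB
        rw [hs, Finset.mem_filter] at hB
        have hinsB := hins y B hB.1 hB.2 j
        have hex : ∃ B', B' ∈ 𝒜 ∧ insert y (φ y j B) ⊆ B' := ⟨B, hB.1, hinsB.1⟩
        simp only [dif_pos hex]
        have hc := hex.choose_spec
        have : hex.choose = B :=
          hblock (insert y (φ y j B)) hinsB.2 hex.choose hc.1 hc.2 B hB.1 hinsB.1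
        rw [this]
      refine ⟨?_, ?_, ?_, ?_⟩
      · intro u hu
        obtain ⟨B, hB, rfl⟩ := Finset.mem_image.1 hu
        rw [hsig B hB]
        rw [hs, Finset.mem_filter] at hB
        exact ⟨hB.1, hB.2⟩
      · intro u hu u' hu' heq
        rw [Finset.mem_coe] at hu hu'
        obtain ⟨B, hB, rfl⟩ := Finset.mem_image.1 hu
        obtain ⟨B', hB', rfl⟩ := Finset.mem_image.1 hu'
        rw [hsig B hB, hsig B' hB'] at heq
        have : B = B' := (Prod.ext_iff.1 heq).2
        rw [this]
      · intro u hu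
        obtain ⟨B, hB, rfl⟩ := Finset.mem_image.1 hu
        rw [hsig B hB]
        rw [hs, Finset.mem_filter] at hB
        exact ⟨hnotmem y B hB.1 hB.2 j, (hins y B hB.1 hB.2 j).1⟩
      · intro u hu u' hu' hne hM
        obtain ⟨B, hB, rfl⟩ := Finset.mem_image.1 hu
        obtain ⟨B', hB', rfl⟩ := Finset.mem_image.1 hu'
        rw [hsig B' hB'] at hM
        rw [hs, Finset.mem_filter] at hB hB'
        have hinsB := hins y B hB.1 hB.2 j
        have hBB' : B = B' :=
          hblock (insert y (φ y j B)) hinsB.2 B hB.1 hinsB.1 B' hB'.1 hM.2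
        exact hne (by rw [hBB'])
  · -- cardinality of index family
    rw [Fintype.card_prod, hX, hJ]
  · -- cover
    intro D y₀ B₀ hB₀ hy₀B₀ hDcard hy₀D hsub
    have hDB₀ : D ⊆ B₀.erase y₀ := fun x hx => Finset.mem_erase.2
      ⟨fun h => hy₀D (h ▸ hx), hsub (Finset.mem_insert_of_mem hx)⟩
    obtain ⟨j₀, hj₀⟩ := hsurj y₀ B₀ hB₀ hy₀B₀ D hDB₀ hDcard
    have hcardins : (insert y₀ D).card = t := by
      rw [Finset.card_insert_of_notMem hy₀D, hDcard]; omega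
    -- any p satisfying the conditions has φ y₀ p.2 B₀ = D
    have hmain : ∀ p : X × J,
        (D ∈ (𝒜.filter (fun B => p.1 ∈ B)).image (φ p.1 p.2) ∧
         p.1 = y₀ ∧ B₀ ∈ 𝒜.filter (fun B => p.1 ∈ B)) → φ y₀ p.2 B₀ = D := by
      rintro ⟨y, j⟩ ⟨hDmem, rfl, _⟩
      obtain ⟨B, hB, hφB⟩ := Finset.mem_image.1 hDmem
      rw [Finset.mem_filter] at hB
      have hinsB := hins y B hB.1 hB.2 j
      have : B = B₀ := hblock (insert y D) hcardins B hB.1 (by rw [← hφB]; exact hinsB.1)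
        B₀ hB₀ hsub
      rw [← this]; exact hφB
    refine ⟨⟨(y₀, j₀), ⟨?_, rfl, Finset.mem_filter.2 ⟨hB₀, hy₀B₀⟩⟩, ?_⟩, hmain⟩
    · exact Finset.mem_image.2 ⟨B₀, Finset.mem_filter.2 ⟨hB₀, hy₀B₀⟩, hj₀⟩
    · rintro ⟨y, j⟩ hp
      have h1 := hmain (y, j) hp
      have hy : y = y₀ := hp.2.1
      have : j = j₀ := by
        have := (hφ y₀ B₀ hB₀ hy₀B₀).injOn (Set.mem_univ j) (Set.mem_univ j₀)
        exact this (by simpa using h1.trans hj₀.symm)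
      rw [hy, this]
end

section
/- Let (X, 𝒢, ℬ) be a transversal design TD(k,n) with k ≥ 2 and n ≥ 1, and let x ∈ X. Then: (i) the map A ↦ next(A,x) is injective on B_x; (ii) for all blocks A, A' ∈ B_x, one has next(A',x) ∈ A if and only if A' = A. Consequently, the row set B_x, with row A matched to column next(A,x) for each A ∈ B_x, is an identity submatrix of the transpose incidence matrix C, of size n. -/
theorem stmt7 (k n : ℕ) (hk : 2 ≤ k) (hn : 1 ≤ n)
    (X : Type*) [Fintype X] [DecidableEq X] (hX : Fintype.card X = k * n)
    (𝒢 : Fin k → Finset X)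
    (hGcard : ∀ i, (𝒢 i).card = n)
    (hGpart : ∀ x : X, ∃! i, x ∈ 𝒢 i)
    (ℬ : Finset (Finset X))
    (hBcard : ∀ A ∈ ℬ, A.card = k)
    (hTD : ∀ x y : X, x ≠ y →
      (((∃! i, x ∈ 𝒢 i ∧ y ∈ 𝒢 i) ∧ ¬ ∃ A ∈ ℬ, x ∈ A ∧ y ∈ A) ∨
       ((¬ ∃ i, x ∈ 𝒢 i ∧ y ∈ 𝒢 i) ∧ (∃! A, A ∈ ℬ ∧ x ∈ A ∧ y ∈ A))))
    -- `gi x` is the (unique) index of the group containing `x`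
    (gi : X → Fin k) (hgi : ∀ x : X, x ∈ 𝒢 (gi x))
    -- `nxt A x = next(A,x)` is the unique point of the block `A` lying in the
    -- group whose index follows (mod k) that of the group containing `x`
    (nxt : Finset X → X → X)
    (hnxt : ∀ A ∈ ℬ, ∀ x ∈ A, nxt A x ∈ A ∧
      nxt A x ∈ 𝒢 ⟨((gi x).val + 1) % k, Nat.mod_lt _ (by omega)⟩)
    (x : X) :
    -- (i) A ↦ next(A,x) is injective on B_x
    (Set.InjOn (fun A => nxt A x) ↑(ℬ.filter (fun A => x ∈ A))) ∧
    -- (ii) next(A',x) ∈ A iff A' = A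
    (∀ A ∈ ℬ.filter (fun A => x ∈ A), ∀ A' ∈ ℬ.filter (fun A => x ∈ A),
      (nxt A' x ∈ A ↔ A' = A)) ∧
    -- consequence: row set B_x with row A matched to column next(A,x) is an
    -- identity submatrix of the transpose incidence matrix C, of size n
    (IsIdentitySubmatrix (fun (A : Finset X) (y : X) => y ∈ A) Set.univ
      (ℬ.filter (fun A => x ∈ A)) (fun A => nxt A x) ∧
     (ℬ.filter (fun A => x ∈ A)).card = n) := by
  classical
  set j : Fin k := ⟨((gi x).val + 1) % k, Nat.mod_lt _ (by omega)⟩ with hj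
  have hne_j : gi x ≠ j := by
    intro h
    have hv : (gi x).val < k := (gi x).isLt
    have he : ((gi x).val + 1) % k = (gi x).val := (congrArg Fin.val h).symm
    rcases Nat.lt_or_ge ((gi x).val + 1) k with h1 | h1
    · rw [Nat.mod_eq_of_lt h1] at he; omega
    · have hk1 : (gi x).val + 1 = k := by omega
      rw [hk1, Nat.mod_self] at he; omega
  have hxnotj : x ∉ 𝒢 j := by
    intro hx
    obtain ⟨i, hi, hu⟩ := hGpart x
    have h1 : gi x = i := hu _ (hgi x)
    have h2 : j = i := hu _ hx
    exact hne_j (h1.trans h2.symm)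
  have hnog : ∀ y, y ∈ 𝒢 j → ¬ ∃ i, x ∈ 𝒢 i ∧ y ∈ 𝒢 i := by
    rintro y hy ⟨i, hxi, hyi⟩
    obtain ⟨i', -, hu⟩ := hGpart x
    obtain ⟨i'', -, hu'⟩ := hGpart y
    have h1 : gi x = i := (hu _ (hgi x)).trans (hu _ hxi).symm
    have h2 : i = j := (hu' _ hyi).trans (hu' _ hy).symm
    exact hne_j (h1.trans h2)
  have hneq : ∀ y ∈ 𝒢 j, x ≠ y := fun y hy h => hxnotj (h ▸ hy)
  set R := ℬ.filter (fun A => x ∈ A) with hR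
  have hmemR : ∀ A, A ∈ R ↔ A ∈ ℬ ∧ x ∈ A := by
    intro A; simp [hR]
  have key : ∀ A' ∈ R, ∀ A ∈ R, nxt A' x ∈ A → A' = A := by
    intro A' hA' A hA hmem
    rw [hmemR] at hA hA'
    obtain ⟨hy1, hy2⟩ := hnxt A' hA'.1 x hA'.2
    rcases hTD x (nxt A' x) (hneq _ hy2) with ⟨-, hno⟩ | ⟨-, B, -, hu⟩
    · exact absurd ⟨A', hA'.1, hA'.2, hy1⟩ hno
    · exact (hu A' ⟨hA'.1, hA'.2, hy1⟩).trans (hu A ⟨hA.1, hA.2, hmem⟩).symm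
  have hmemself : ∀ A ∈ R, nxt A x ∈ A := by
    intro A hA; rw [hmemR] at hA; exact (hnxt A hA.1 x hA.2).1
  have hinj : Set.InjOn (fun A => nxt A x) ↑R := by
    intro A hA A' hA' h
    simp only at h
    have hm : nxt A' x ∈ A := h ▸ hmemself A (by simpa using hA)
    exact (key A' (by simpa using hA') A (by simpa using hA) hm).symm
  refine ⟨hinj, ?_, ⟨fun u _ => trivial, hinj, hmemself, ?_⟩, ?_⟩
  · intro A hA A' hA'
    exact ⟨key A' hA' A hA, fun h => h ▸ hmemself A' hA'⟩
  · intro u hu u' hu' hne hmem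
    exact hne (key u' hu' u hu hmem).symm
  · rw [← hGcard j]
    apply Finset.card_bij (fun A _ => nxt A x)
    · intro A hA; rw [hmemR] at hA; exact (hnxt A hA.1 x hA.2).2
    · intro A hA A' hA' h
      exact hinj (by simpa using hA) (by simpa using hA') h
    · intro y hy
      rcases hTD x y (hneq y hy) with ⟨⟨i, hi, -⟩, -⟩ | ⟨-, A, ⟨hAB, hxA, hyA⟩, -⟩
      · exact absurd ⟨i, hi⟩ (hnog y hy)
      · refine ⟨A, (hmemR A).2 ⟨hAB, hxA⟩, ?_⟩
        by_contra hne
        obtain ⟨hz1, hz2⟩ := hnxt A hAB x hxA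
        rcases hTD (nxt A x) y hne with ⟨-, hno⟩ | ⟨hno, -⟩
        · exact hno ⟨A, hAB, hz1, hyA⟩
        · exact hno ⟨j, hz2, hy⟩
end

section
/- Let 𝒜 be a t-(v,k,1)_q subspace design on V with 2 ≤ t ≤ k < v, let y be a 1-dimensional subspace of V, and let φ be any map assigning to each block B ∈ B_y a (t−1)-dimensional subspace φ(B) of B with y ⊄ φ(B). Then: (i) φ is injective on B_y; (ii) for all blocks B, B' ∈ B_y, one has φ(B') + y ≤ B if and only if B' = B. Consequently, the row set {φ(B) : B ∈ B_y}, with row φ(B) matched to column (y,B) for each B ∈ B_y, is an identity submatrix of the matrix C of size |B_y|. -/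
open Module

open scoped Classical in
theorem stmt9 (q v k t : ℕ) (ht : 2 ≤ t) (htk : t ≤ k) (hkv : k < v)
    (𝔽 : Type*) [Field 𝔽] [Fintype 𝔽] (hq : Fintype.card 𝔽 = q)
    (V : Type*) [AddCommGroup V] [Module 𝔽 V] [FiniteDimensional 𝔽 V]
    (hV : finrank 𝔽 V = v)
    (𝒜 : Finset (Submodule 𝔽 V))
    (hdim : ∀ B ∈ 𝒜, finrank 𝔽 B = k)
    (hdesign : ∀ T : Submodule 𝔽 V, finrank 𝔽 T = t → ∃! B, B ∈ 𝒜 ∧ T ≤ B)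
    (y : Submodule 𝔽 V) (hy : finrank 𝔽 y = 1)
    (φ : Submodule 𝔽 V → Submodule 𝔽 V)
    (hφ : ∀ B ∈ 𝒜.filter (fun B => y ≤ B),
      finrank 𝔽 (φ B) = t - 1 ∧ φ B ≤ B ∧ ¬ y ≤ φ B) :
    -- (i) φ is injective on B_y
    (Set.InjOn φ ↑(𝒜.filter (fun B => y ≤ B))) ∧
    -- (ii) φ(B') + y ≤ B iff B' = B
    (∀ B ∈ 𝒜.filter (fun B => y ≤ B), ∀ B' ∈ 𝒜.filter (fun B => y ≤ B),
      (φ B' ⊔ y ≤ B ↔ B' = B)) ∧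
    -- consequence: the row set {φ(B) : B ∈ B_y}, with row φ(B) matched to column
    -- (y,B), is an identity submatrix of the matrix C of size |B_y|
    (∃ σ : Submodule 𝔽 V → Submodule 𝔽 V × Submodule 𝔽 V,
      (∀ B ∈ 𝒜.filter (fun B => y ≤ B), σ (φ B) = (y, B)) ∧
      IsIdentitySubmatrix
        (fun (D : Submodule 𝔽 V) (p : Submodule 𝔽 V × Submodule 𝔽 V) =>
          ¬ p.1 ≤ D ∧ finrank 𝔽 ↥(D ⊔ p.1) = t ∧ D ⊔ p.1 ≤ p.2)
        {p : Submodule 𝔽 V × Submodule 𝔽 V |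
          p.2 ∈ 𝒜 ∧ finrank 𝔽 p.1 = 1 ∧ p.1 ≤ p.2}
        ((𝒜.filter (fun B => y ≤ B)).image φ) σ ∧
      ((𝒜.filter (fun B => y ≤ B)).image φ).card
        = (𝒜.filter (fun B => y ≤ B)).card) := by

  have hkey : ∀ B ∈ 𝒜.filter (fun B => y ≤ B),
      finrank 𝔽 ↥(φ B ⊔ y) = t ∧ φ B ⊔ y ≤ B := by
    intro B hB
    obtain ⟨hd, hle, hny⟩ := hφ B hB
    have hyB : y ≤ B := (Finset.mem_filter.mp hB).2
    have hinf : φ B ⊓ y = ⊥ := by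
      by_contra h
      have h1 : 0 < finrank 𝔽 ↥(φ B ⊓ y) := by
        rw [Nat.pos_iff_ne_zero]
        intro h0
        exact h (Submodule.finrank_eq_zero.mp h0)
      have h2 : φ B ⊓ y = y := by
        apply Submodule.eq_of_le_of_finrank_le inf_le_right
        omega
      exact hny (h2 ▸ inf_le_left)
    have hsum := Submodule.finrank_sup_add_finrank_inf_eq (φ B) y
    rw [hinf, finrank_bot] at hsum
    constructor
    · omega
    · exact sup_le hle hyB
  have hii : ∀ B ∈ 𝒜.filter (fun B => y ≤ B), ∀ B' ∈ 𝒜.filter (fun B => y ≤ B),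
      (φ B' ⊔ y ≤ B ↔ B' = B) := by
    intro B hB B' hB'
    constructor
    · intro hle
      obtain ⟨hr, hle'⟩ := hkey B' hB'
      obtain ⟨C, _, hu⟩ := hdesign (φ B' ⊔ y) hr
      exact (hu B' ⟨(Finset.mem_filter.mp hB').1, hle'⟩).trans
        (hu B ⟨(Finset.mem_filter.mp hB).1, hle⟩).symm
    · intro h
      rw [← h]
      exact (hkey B' hB').2
  have hinj : Set.InjOn φ ↑(𝒜.filter (fun B => y ≤ B)) := by
    intro B hB B' hB' h
    apply (hii B' hB' B hB).mp
    rw [h]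
    exact (hkey B' hB').2
  refine ⟨hinj, hii, ?_⟩
  refine ⟨fun D => (y, if h : ∃ B ∈ 𝒜.filter (fun B => y ≤ B), φ B = D
      then h.choose else ⊥), ?_, ?_, ?_⟩
  · intro B hB
    have hex : ∃ B' ∈ 𝒜.filter (fun B => y ≤ B), φ B' = φ B := ⟨B, hB, rfl⟩
    simp only [dif_pos hex]
    have := hex.choose_spec
    have : hex.choose = B := hinj this.1 hB this.2
    rw [this]
  · have hσ : ∀ B ∈ 𝒜.filter (fun B => y ≤ B),
        (fun D => (y, if h : ∃ B ∈ 𝒜.filter (fun B => y ≤ B), φ B = D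
          then h.choose else ⊥)) (φ B) = (y, B) := by
      intro B hB
      have hex : ∃ B' ∈ 𝒜.filter (fun B => y ≤ B), φ B' = φ B := ⟨B, hB, rfl⟩
      simp only [dif_pos hex]
      have h2 := hex.choose_spec
      have : hex.choose = B := hinj h2.1 hB h2.2
      rw [this]
    refine ⟨?_, ?_, ?_, ?_⟩
    · intro u hu
      obtain ⟨B, hB, rfl⟩ := Finset.mem_image.mp hu
      rw [hσ B hB]
      exact ⟨(Finset.mem_filter.mp hB).1, hy, (Finset.mem_filter.mp hB).2⟩
    · intro u hu u' hu' heq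
      obtain ⟨B, hB, rfl⟩ := Finset.mem_image.mp hu
      obtain ⟨B', hB', rfl⟩ := Finset.mem_image.mp hu'
      rw [hσ B hB, hσ B' hB'] at heq
      rw [(Prod.mk.injEq _ _ _ _).mp heq |>.2]
    · intro u hu
      obtain ⟨B, hB, rfl⟩ := Finset.mem_image.mp hu
      rw [hσ B hB]
      obtain ⟨hr, hle⟩ := hkey B hB
      exact ⟨(hφ B hB).2.2, hr, hle⟩
    · intro u hu u' hu' hne
      obtain ⟨B, hB, rfl⟩ := Finset.mem_image.mp hu
      obtain ⟨B', hB', rfl⟩ := Finset.mem_image.mp hu'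
      rw [hσ B' hB']
      rintro ⟨-, -, hle⟩
      exact hne (by rw [(hii B' hB' B hB).mp hle])
  · exact Finset.card_image_of_injOn hinj
end

section
/- Let 𝒜 be a t-(v,k,1)_q subspace design on V with 2 ≤ t ≤ k < v. Let J be an index set, and suppose that for each 1-dimensional subspace y of V one is given maps φ^y_j : B_y → (t−1)-dimensional subspaces of V (for j ∈ J) such that for every block B ∈ B_y, the assignment j ↦ φ^y_j(B) is a bijection from J onto the set of all (t−1)-dimensional subspaces of B not containing y. For each such y and j ∈ J, let C_{y,j} denote the identity submatrix of C with row set {φ^y_j(B) : B ∈ B_y} and row φ^y_j(B) matched to column (y,B). Then the family {C_{y,j} : y a 1-dimensional subspace of V, j ∈ J} is a non-overlapping identity submatrix cover of C: every one-entry C(D,(y,B)) = 1 is covered by exactly one member of the family, namely C_{y,j} for the unique j ∈ J with φ^y_j(B) = D. -/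
open Module

open scoped Classical in
theorem stmt11 (q v k t : ℕ) (ht : 2 ≤ t) (htk : t ≤ k) (hkv : k < v)
    (𝔽 : Type*) [Field 𝔽] [Fintype 𝔽] (hq : Fintype.card 𝔽 = q)
    (V : Type*) [AddCommGroup V] [Module 𝔽 V] [FiniteDimensional 𝔽 V]
    (hV : finrank 𝔽 V = v)
    (𝒜 : Finset (Submodule 𝔽 V))
    (hdim : ∀ B ∈ 𝒜, finrank 𝔽 B = k)
    (hdesign : ∀ T : Submodule 𝔽 V, finrank 𝔽 T = t → ∃! B, B ∈ 𝒜 ∧ T ≤ B)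
    (J : Type*)
    (φ : Submodule 𝔽 V → J → Submodule 𝔽 V → Submodule 𝔽 V)
    -- for each 1-dim y and each block B containing y, j ↦ φ y j B is a bijection
    -- from J onto the set of all (t−1)-dim subspaces of B not containing y
    (hφ : ∀ y : Submodule 𝔽 V, finrank 𝔽 y = 1 → ∀ B ∈ 𝒜, y ≤ B →
      Set.BijOn (fun j => φ y j B) Set.univ
        {D : Submodule 𝔽 V | finrank 𝔽 D = t - 1 ∧ D ≤ B ∧ ¬ y ≤ D}) :
    -- every one-entry C(D,(y,B)) = 1 is covered by exactly one member C_{y',j} of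
    -- the family, namely the one with y' = y and j the unique index with φ y j B = D
    ∀ (D y B : Submodule 𝔽 V), finrank 𝔽 D = t - 1 → finrank 𝔽 y = 1 →
      B ∈ 𝒜 → y ≤ B → ¬ y ≤ D → finrank 𝔽 ↥(D ⊔ y) = t → D ⊔ y ≤ B →
      (∃! p : Submodule 𝔽 V × J,
        finrank 𝔽 p.1 = 1 ∧
        D ∈ (𝒜.filter (fun B' => p.1 ≤ B')).image (φ p.1 p.2) ∧
        p.1 = y ∧ B ∈ 𝒜.filter (fun B' => p.1 ≤ B')) ∧
      (∀ p : Submodule 𝔽 V × J,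
        (finrank 𝔽 p.1 = 1 ∧
         D ∈ (𝒜.filter (fun B' => p.1 ≤ B')).image (φ p.1 p.2) ∧
         p.1 = y ∧ B ∈ 𝒜.filter (fun B' => p.1 ≤ B')) →
        p.1 = y ∧ φ y p.2 B = D) := by
  intro D y B hD hy hB hyB hyD hDy hDyB
  have hbij := hφ y hy B hB hyB
  have hDmem : D ∈ {D : Submodule 𝔽 V | finrank 𝔽 D = t - 1 ∧ D ≤ B ∧ ¬ y ≤ D} :=
    ⟨hD, le_trans le_sup_left hDyB, hyD⟩
  obtain ⟨j, -, hj⟩ := hbij.surjOn hDmem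
  have key : ∀ p : Submodule 𝔽 V × J,
      (finrank 𝔽 p.1 = 1 ∧
       D ∈ (𝒜.filter fun B' => p.1 ≤ B').image (φ p.1 p.2) ∧
       p.1 = y ∧ B ∈ 𝒜.filter fun B' => p.1 ≤ B') →
      p.1 = y ∧ φ y p.2 B = D := by
    rintro ⟨y', j'⟩ ⟨hy', hDim, rfl, hBf⟩
    refine ⟨rfl, ?_⟩
    simp only [Finset.mem_image, Finset.mem_filter] at hDim
    obtain ⟨B', ⟨hB'A, hyB'⟩, hphiB'⟩ := hDim
    have hmem := (hφ y' hy B' hB'A hyB').mapsTo (Set.mem_univ j')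
    simp only [Set.mem_setOf_eq] at hmem
    rw [hphiB'] at hmem
    have hB'eq : B' = B := by
      obtain ⟨B0, hB0, huniq⟩ := hdesign (D ⊔ y') hDy
      have h1 : B' = B0 := huniq B' ⟨hB'A, sup_le hmem.2.1 hyB'⟩
      have h2 : B = B0 := huniq B ⟨hB, hDyB⟩
      rw [h1, h2]
    rwa [hB'eq] at hphiB'
  constructor
  · refine ⟨(y, j), ⟨hy, ?_, rfl, Finset.mem_filter.mpr ⟨hB, hyB⟩⟩, ?_⟩
    · exact Finset.mem_image.mpr ⟨B, Finset.mem_filter.mpr ⟨hB, hyB⟩, hj⟩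
    · rintro ⟨y', j'⟩ hq
      obtain ⟨h1, h2⟩ := key _ hq
      have hj' : j' = j := hbij.injOn (Set.mem_univ _) (Set.mem_univ _)
        (show φ y j' B = φ y j B from h2.trans hj.symm)
      exact Prod.ext h1 hj'
  · exact key
end

section
/- Let 𝔽 be a finite field with q elements, let 2 ≤ t ≤ k, let W be a k-dimensional 𝔽-vector space, and let y be a 1-dimensional subspace of W. Then the number of (t−1)-dimensional subspaces D of W with y ⊄ D equals q^{t−1} times the number of (t−1)-dimensional subspaces of a (k−1)-dimensional 𝔽-vector space. (This is the column-weight count: every column of the matrix C associated with a t-(v,k,1)_q subspace design contains exactly [k−1 choose t−1]_q · q^{t−1} ones.) -/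
/-!
Split `W = H ⊕ y` with `H` a complement of the line `y`. A subspace `D` of dimension `t - 1` not
containing `y` meets `y` trivially (as `y` is an atom), so it is the graph of a unique linear map
`E → y` defined on its projection `E ≤ H`, which again has dimension `t - 1`. Conversely each
such pair `(E, f)` gives one `D`, and there are `q ^ (t - 1)` maps `E → y` for each `E`.
-/

open Module

namespace LinearPMap

variable {R E F : Type*} [Ring R] [AddCommGroup E] [Module R E] [AddCommGroup F] [Module R F]

theorem graph_eq_range_prod (f : E →ₗ.[R] F) :
    f.graph = LinearMap.range (f.domain.subtype.prod f.toFun) := by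
  ext ⟨x, y⟩
  simp [eq_comm]

theorem finrank_graph (f : E →ₗ.[R] F) : finrank R f.graph = finrank R f.domain := by
  rw [graph_eq_range_prod, LinearMap.finrank_range_of_inj]
  exact fun a b h => Subtype.ext (congrArg Prod.fst h)

theorem disjoint_graph_snd (f : E →ₗ.[R] F) : Disjoint f.graph (Submodule.snd R E F) := by
  rw [Submodule.disjoint_def]
  rintro ⟨x, y⟩ hf hx
  obtain rfl : x = 0 := by simpa [Submodule.snd] using hx
  simp [f.graph_fst_eq_zero_snd hf rfl]

noncomputable def graphEquiv :
    (E →ₗ.[R] F) ≃ {g : Submodule R (E × F) // Disjoint g (Submodule.snd R E F)} where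
  toFun f := ⟨f.graph, f.disjoint_graph_snd⟩
  invFun g := g.1.toLinearPMap
  left_inv f := eq_of_eq_graph <| Submodule.toLinearPMap_graph_eq _ fun _ hx hx0 =>
    f.graph_fst_eq_zero_snd (x := 0) (by rwa [← hx0]) rfl
  right_inv g := Subtype.ext <| Submodule.toLinearPMap_graph_eq _ fun x hx hx0 => by
    have := Submodule.disjoint_def.mp g.2 x hx (by simpa [Submodule.snd] using hx0)
    simp [this]

end LinearPMap

section DivisionRing

variable {K E F : Type*} [DivisionRing K] [AddCommGroup E] [Module K E]
  [AddCommGroup F] [Module K F]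

theorem Nat.card_linearMap_of_finrank_eq {m : ℕ} [FiniteDimensional K E]
    (h : finrank K E = m) : Nat.card (E →ₗ[K] F) = Nat.card F ^ m :=
  calc Nat.card (E →ₗ[K] F) = Nat.card (Fin m → F) :=
        Nat.card_congr ((Module.finBasisOfFinrankEq K E h).constr ℕ).toEquiv.symm
    _ = Nat.card F ^ m := by rw [Nat.card_fun, Nat.card_fin]

theorem Submodule.card_disjoint_snd_finrank_eq [Finite K] [FiniteDimensional K E] [Finite F]
    (m : ℕ) :
    Nat.card {g : Submodule K (E × F) // Disjoint g (Submodule.snd K E F) ∧ finrank K g = m}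
      = Nat.card F ^ m * Nat.card {p : Submodule K E // finrank K p = m} := by
  have : Finite E := Module.finite_of_finite K
  have := Fintype.ofFinite {p : Submodule K E // finrank K p = m}
  have (p : Submodule K E) : Finite (p →ₗ[K] F) := .of_injective _ DFunLike.coe_injective
  calc _ = Nat.card {f : E →ₗ.[K] F // finrank K f.domain = m} :=
        Nat.card_congr <| (Equiv.subtypeSubtypeEquivSubtypeInter _ _).symm.trans <|
          (LinearPMap.graphEquiv.subtypeEquiv fun f => by rw [← f.finrank_graph]; rfl).symm
    _ = Nat.card (Σ p : {p : Submodule K E // finrank K p = m}, p.1 →ₗ[K] F) :=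
        Nat.card_congr
          { toFun f := ⟨⟨f.1.domain, f.2⟩, f.1.toFun⟩
            invFun p := ⟨⟨p.1.1, p.2⟩, p.1.2⟩
            left_inv _ := rfl
            right_inv _ := rfl }
    _ = Nat.card F ^ m * Nat.card {p : Submodule K E // finrank K p = m} := by
      rw [Nat.card_sigma, Finset.sum_congr rfl fun p _ => Nat.card_linearMap_of_finrank_eq p.2,
        Finset.sum_const, Finset.card_univ, ← Nat.card_eq_fintype_card, smul_eq_mul, mul_comm]

end DivisionRing

section Ring

variable {R V W : Type*} [Ring R] [AddCommGroup V] [Module R V] [AddCommGroup W] [Module R W]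

theorem LinearEquiv.natCard_submodule_subtype_congr (e : V ≃ₗ[R] W)
    {P : Submodule R V → Prop} {Q : Submodule R W → Prop}
    (h : ∀ D, P D ↔ Q (D.map (e : V →ₗ[R] W))) :
    Nat.card {D // P D} = Nat.card {D // Q D} :=
  Nat.card_congr ((Submodule.orderIsoMapComap e).toEquiv.subtypeEquiv h)

theorem LinearEquiv.disjoint_map_iff (e : V ≃ₗ[R] W) {p q : Submodule R V} :
    Disjoint (p.map (e : V →ₗ[R] W)) (q.map (e : V →ₗ[R] W)) ↔ Disjoint p q :=
  disjoint_map_orderIso_iff (Submodule.orderIsoMapComap e)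

theorem Submodule.map_prodEquivOfIsCompl_symm_right {p q : Submodule R V} (h : IsCompl p q) :
    q.map ((prodEquivOfIsCompl p q h).symm : V →ₗ[R] p × q) = Submodule.snd R p q := by
  ext ⟨a, b⟩
  constructor
  · rintro ⟨x, hx, hxab⟩
    simpa [Submodule.snd, ← hxab] using (prodEquivOfIsCompl_symm_apply_fst_eq_zero p q h).mpr hx
  · intro (ha : a = 0)
    exact ⟨b, b.2, by simp [ha]⟩

end Ring

theorem stmt13_general (q k t : ℕ)
    (𝔽 : Type*) [Field 𝔽] [Fintype 𝔽] (hq : Fintype.card 𝔽 = q)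
    (W : Type*) [AddCommGroup W] [Module 𝔽 W] [FiniteDimensional 𝔽 W]
    (hW : finrank 𝔽 W = k)
    (y : Submodule 𝔽 W) (hy : finrank 𝔽 y = 1) :
    Nat.card {D : Submodule 𝔽 W // finrank 𝔽 D = t - 1 ∧ ¬ y ≤ D}
      = q ^ (t - 1)
        * Nat.card {D : Submodule 𝔽 (Fin (k - 1) → 𝔽) // finrank 𝔽 D = t - 1} := by
  have : Finite W := Module.finite_of_finite 𝔽
  obtain ⟨H, hH⟩ := Submodule.exists_isCompl y
  set e := (Submodule.prodEquivOfIsCompl H y hH.symm).symm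
  have hH_finrank : finrank 𝔽 H = finrank 𝔽 (Fin (k - 1) → 𝔽) := by
    have := Submodule.finrank_add_eq_of_isCompl hH
    rw [Module.finrank_fin_fun]
    omega
  have hy_card : Nat.card y = q := by
    have := Fintype.ofFinite y
    rw [Nat.card_eq_fintype_card, Module.card_eq_pow_finrank (K := 𝔽), hy, pow_one, hq]
  calc _ = Nat.card {D : Submodule 𝔽 (H × y) //
          Disjoint D (Submodule.snd 𝔽 H y) ∧ finrank 𝔽 D = t - 1} :=
        e.natCard_submodule_subtype_congr fun D => by
          rw [← Submodule.map_prodEquivOfIsCompl_symm_right hH.symm, e.disjoint_map_iff,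
            e.finrank_map_eq, disjoint_comm,
            ← (Submodule.isAtom_iff_finrank_eq_one.mpr hy).not_le_iff_disjoint, and_comm]
    _ = q ^ (t - 1) * Nat.card {D : Submodule 𝔽 H // finrank 𝔽 D = t - 1} := by
      rw [Submodule.card_disjoint_snd_finrank_eq, hy_card]
    _ = _ := by
      congr 1
      exact (LinearEquiv.ofFinrankEq _ _ hH_finrank).natCard_submodule_subtype_congr fun D => by
        rw [LinearEquiv.finrank_map_eq]

theorem stmt13 (q k t : ℕ) (ht : 2 ≤ t) (htk : t ≤ k)
    (𝔽 : Type*) [Field 𝔽] [Fintype 𝔽] (hq : Fintype.card 𝔽 = q)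
    (W : Type*) [AddCommGroup W] [Module 𝔽 W] [FiniteDimensional 𝔽 W]
    (hW : finrank 𝔽 W = k)
    (y : Submodule 𝔽 W) (hy : finrank 𝔽 y = 1) :
    Nat.card {D : Submodule 𝔽 W // finrank 𝔽 D = t - 1 ∧ ¬ y ≤ D}
      = q ^ (t - 1)
        * Nat.card {D : Submodule 𝔽 (Fin (k - 1) → 𝔽) // finrank 𝔽 D = t - 1} :=
  stmt13_general q k t 𝔽 hq W hW y hy
end

section
/- Fix integers 1 ≤ r < K. Let M be the binary matrix whose rows are indexed by the elements k of a K-element set 𝒦 and whose columns are indexed by the r-element subsets A of 𝒦, with M(k,A) = 1 if k ∉ A and M(k,A) = 0 if k ∈ A. For each (r+1)-element subset B of 𝒦, let C_B be the submatrix with row set B and with row k matched to column B ∖ {k} for each k ∈ B. Then each C_B is an identity submatrix of M of size r+1, and the family {C_B : B an (r+1)-element subset of 𝒦} is a non-overlapping identity submatrix cover of M: the entry M(k,A) = 1 is covered precisely by the identity submatrix C_{{k} ∪ A} and by no other member of the family. -/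
theorem stmt16 (K r : ℕ) (hr : 1 ≤ r) (hrK : r < K)
    (𝒦 : Type*) [Fintype 𝒦] [DecidableEq 𝒦] (hK : Fintype.card 𝒦 = K) :
    -- each C_B (row set B, row k matched to column B \ {k}) is an identity
    -- submatrix of M of size r+1
    (∀ B : Finset 𝒦, B.card = r + 1 →
      IsIdentitySubmatrix (fun (k : 𝒦) (A : Finset 𝒦) => k ∉ A)
        {A : Finset 𝒦 | A.card = r} B (fun k => B.erase k) ∧
      B.card = r + 1) ∧
    -- the family {C_B} is a non-overlapping identity submatrix cover: the
    -- one-entry M(k,A) = 1 is covered precisely by C_{{k} ∪ A} and no other member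
    (∀ (k : 𝒦) (A : Finset 𝒦), A.card = r → k ∉ A →
      (∃! B : Finset 𝒦, B.card = r + 1 ∧ k ∈ B ∧
        A ∈ B.image (fun k' => B.erase k')) ∧
      (∀ B : Finset 𝒦, (B.card = r + 1 ∧ k ∈ B ∧
        A ∈ B.image (fun k' => B.erase k')) → B = insert k A)) := by
  have key : ∀ (k : 𝒦) (A : Finset 𝒦), A.card = r → k ∉ A →
      ∀ B : Finset 𝒦, (B.card = r + 1 ∧ k ∈ B ∧
        A ∈ B.image (fun k' => B.erase k')) → B = insert k A := by
    intro k A hA hkA B ⟨hB, hkB, hAim⟩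
    obtain ⟨k', hk', hk'A⟩ := Finset.mem_image.mp hAim
    have hkk' : k = k' := by
      by_contra h
      exact hkA (hk'A ▸ Finset.mem_erase.mpr ⟨h, hkB⟩)
    subst hkk'
    rw [← hk'A, Finset.insert_erase hkB]
  constructor
  · intro B hB
    refine ⟨⟨?_, ?_, ?_, ?_⟩, hB⟩
    · intro u hu
      simp only [Set.mem_setOf_eq, Finset.card_erase_of_mem hu, hB, Nat.add_sub_cancel]
    · intro u hu u' hu' h
      by_contra hne
      have h' : B.erase u = B.erase u' := h
      have hm : u ∈ B.erase u' := Finset.mem_erase.mpr ⟨hne, hu⟩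
      rw [← h'] at hm
      exact Finset.notMem_erase u B hm
    · intro u hu
      exact Finset.notMem_erase u B
    · intro u hu u' hu' hne hmem
      exact hmem (Finset.mem_erase.mpr ⟨hne, hu⟩)
  · intro k A hA hkA
    refine ⟨⟨insert k A, ⟨?_, Finset.mem_insert_self k A, ?_⟩, fun B hB => key k A hA hkA B hB⟩, key k A hA hkA⟩
    · rw [Finset.card_insert_of_notMem hkA, hA]
    · exact Finset.mem_image.mpr ⟨k, Finset.mem_insert_self k A, Finset.erase_insert hkA⟩
end

section
/- Let 𝒦 be a K-element finite set, let g ≥ 2 and γ ≥ 1 be integers, let S = γK, and let R_1, …, R_S be subsets of 𝒦 with |R_i| = g for every i, such that every element k ∈ 𝒦 belongs to exactly gγ of the sets R_i. Then there exist functions a, b : {1, …, S} → 𝒦 such that for every i: a(i) ∈ R_i, b(i) ∈ R_i, and a(i) ≠ b(i); and for every k ∈ 𝒦: |{i : a(i) = k}| = γ and |{i : b(i) = k}| = γ. (This is the combinatorial content of the load-balancing theorem: if the number of identity submatrices S in a non-overlapping identity submatrix cover with all identities of size g ≥ 2 is divisible by the number of servers K, and each server appears in the row index sets of the same number of identity submatrices,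 then one can assign to each identity submatrix two distinct servers from its row set—one for the coded and one for the uncoded transmission—so that every server is assigned exactly γ = S/K coded and γ uncoded transmissions.) -/
open Finset

/-- Hall-type helper: if each `T i` has at least `g ≥ 1` elements and every
element of `𝒦` lies in at most `g * γ` of the `T i`, with `S = γ * K`,
then there is a choice function hitting every element exactly `γ` times. -/
lemma stmt17_aux {K g γ S : ℕ} (hg : 1 ≤ g) (hS : S = γ * K)
    (𝒦 : Type*) [Fintype 𝒦] [DecidableEq 𝒦] (hK : Fintype.card 𝒦 = K)
    (T : Fin S → Finset 𝒦) (hsz : ∀ i, g ≤ (T i).card)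
    (hdeg : ∀ k, (Finset.univ.filter (fun i => k ∈ T i)).card ≤ g * γ) :
    ∃ a : Fin S → 𝒦, (∀ i, a i ∈ T i) ∧
      ∀ k, (Finset.univ.filter (fun i => a i = k)).card = γ := by
  set t : Fin S → Finset (𝒦 × Fin γ) := fun i => (T i) ×ˢ (univ : Finset (Fin γ)) with ht
  have hall : ∀ s : Finset (Fin S), s.card ≤ (s.biUnion t).card := by
    intro s
    set U : Finset 𝒦 := s.biUnion T with hU
    have hbu : s.biUnion t = U ×ˢ (univ : Finset (Fin γ)) := by
      ext p
      simp [t, hU, Finset.mem_biUnion, Finset.mem_product]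
    have hcount : g * s.card ≤ U.card * (g * γ) := by
      calc g * s.card = ∑ _i ∈ s, g := by simp [mul_comm]
        _ ≤ ∑ i ∈ s, (T i).card := Finset.sum_le_sum fun i _ => hsz i
        _ = ∑ i ∈ s, (U.filter (fun k => k ∈ T i)).card := by
            refine Finset.sum_congr rfl fun i hi => ?_
            congr 1
            rw [Finset.filter_mem_eq_inter]
            exact (Finset.inter_eq_right.mpr
              (fun k hk => Finset.mem_biUnion.mpr ⟨i, hi, hk⟩)).symm
        _ = ∑ i ∈ s, ∑ k ∈ U, (if k ∈ T i then 1 else 0) := by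
            exact Finset.sum_congr rfl fun i _ => Finset.card_filter _ _
        _ = ∑ k ∈ U, ∑ i ∈ s, (if k ∈ T i then 1 else 0) := Finset.sum_comm
        _ = ∑ k ∈ U, (s.filter (fun i => k ∈ T i)).card :=
            Finset.sum_congr rfl fun k _ => (Finset.card_filter _ _).symm
        _ ≤ ∑ k ∈ U, g * γ := by
            refine Finset.sum_le_sum fun k _ => ?_
            exact le_trans (Finset.card_le_card
              (Finset.filter_subset_filter _ (Finset.subset_univ s))) (hdeg k)
        _ = U.card * (g * γ) := by rw [Finset.sum_const, smul_eq_mul]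
    have hle : s.card ≤ γ * U.card := by
      have : g * s.card ≤ g * (γ * U.card) := by
        calc g * s.card ≤ U.card * (g * γ) := hcount
          _ = g * (γ * U.card) := by ring
      exact Nat.le_of_mul_le_mul_left this hg
    rw [hbu, Finset.card_product, Finset.card_univ, Fintype.card_fin]
    calc s.card ≤ γ * U.card := hle
      _ = U.card * γ := mul_comm _ _
  obtain ⟨f, hfinj, hfmem⟩ :=
    (Finset.all_card_le_biUnion_card_iff_existsInjective' t).mp hall
  have hbij : Function.Bijective f := by
    rw [Fintype.bijective_iff_injective_and_card]
    refine ⟨hfinj, ?_⟩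
    simp [hK, hS, Fintype.card_prod, mul_comm]
  refine ⟨fun i => (f i).1, fun i => ?_, fun k => ?_⟩
  · exact (Finset.mem_product.mp (hfmem i)).1
  · have himg : (Finset.univ.filter (fun i => (f i).1 = k)).image f
        = Finset.univ.filter (fun p : 𝒦 × Fin γ => p.1 = k) := by
      ext p
      simp only [Finset.mem_image, Finset.mem_filter, Finset.mem_univ, true_and]
      constructor
      · rintro ⟨i, hi, rfl⟩; exact hi
      · intro hp
        obtain ⟨i, rfl⟩ := hbij.2 p
        exact ⟨i, hp, rfl⟩
    have h1 : (Finset.univ.filter (fun i => (f i).1 = k)).card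
        = (Finset.univ.filter (fun p : 𝒦 × Fin γ => p.1 = k)).card := by
      rw [← himg, Finset.card_image_of_injective _ hfinj]
    have h2 : Finset.univ.filter (fun p : 𝒦 × Fin γ => p.1 = k)
        = ({k} : Finset 𝒦) ×ˢ (univ : Finset (Fin γ)) := by
      ext ⟨p1, p2⟩
      simp [Finset.mem_product, eq_comm]
    rw [h1, h2, Finset.card_product, Finset.card_singleton, Finset.card_univ,
      Fintype.card_fin, one_mul]

theorem stmt17 (K g γ S : ℕ) (hg : 2 ≤ g) (hγ : 1 ≤ γ) (hS : S = γ * K)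
    (𝒦 : Type*) [Fintype 𝒦] [DecidableEq 𝒦] (hK : Fintype.card 𝒦 = K)
    (R : Fin S → Finset 𝒦)
    (hsize : ∀ i, (R i).card = g)
    -- every element of 𝒦 belongs to exactly gγ of the sets R i
    (hreg : ∀ k : 𝒦, (Finset.univ.filter (fun i => k ∈ R i)).card = g * γ) :
    ∃ a b : Fin S → 𝒦,
      (∀ i : Fin S, a i ∈ R i ∧ b i ∈ R i ∧ a i ≠ b i) ∧
      (∀ k : 𝒦,
        (Finset.univ.filter (fun i => a i = k)).card = γ ∧
        (Finset.univ.filter (fun i => b i = k)).card = γ) := by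
  -- first choice function a
  obtain ⟨a, hamem, hacount⟩ := stmt17_aux (g := g) (Nat.one_le_of_lt hg) hS 𝒦 hK R
    (fun i => (hsize i).ge) (fun k => (hreg k).le)
  -- second choice function b, avoiding a
  have hsub : ∀ k, Finset.univ.filter (fun i => a i = k)
      ⊆ Finset.univ.filter (fun i => k ∈ R i) := by
    intro k i hi
    rw [Finset.mem_filter] at hi ⊢
    exact ⟨hi.1, hi.2 ▸ hamem i⟩
  obtain ⟨b, hbmem, hbcount⟩ := stmt17_aux (g := g - 1)
    (Nat.le_sub_one_of_lt hg) hS 𝒦 hK (fun i => (R i).erase (a i))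
    (by
      intro i
      rw [Finset.card_erase_of_mem (hamem i), hsize i])
    (by
      intro k
      have hfe : Finset.univ.filter (fun i => k ∈ (R i).erase (a i))
          = Finset.univ.filter (fun i => k ∈ R i) \
            Finset.univ.filter (fun i => a i = k) := by
        ext i
        simp only [Finset.mem_filter, Finset.mem_sdiff, Finset.mem_univ, true_and,
          Finset.mem_erase]
        constructor
        · rintro ⟨hne, hmem⟩; exact ⟨hmem, fun h => hne h.symm⟩
        · rintro ⟨hmem, hne⟩; exact ⟨fun h => hne h.symm, hmem⟩
      rw [hfe, Finset.card_sdiff_of_subset (hsub k), hreg k, hacount k, Nat.sub_mul, one_mul])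
  refine ⟨a, b, fun i => ?_, fun k => ⟨hacount k, hbcount k⟩⟩
  have hb := hbmem i
  rw [Finset.mem_erase] at hb
  exact ⟨hamem i, hb.2, fun h => hb.1 h.symm⟩
end
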